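/- arXiv:1306.0409 — 4 statements merged into one kernel-verified Lean document; each statement's English description precedes it below -/
import Mathlib

section
/- Let T be a 2×2 unitary matrix with overlap c = max_{k,l=1,2} |T_{lk}|, and let α, β ∈ [0, 1/2] with λ = max(α, β). Then for every unit vector ψ ∈ ℂ², H_α(|ψ|²) + H_β(|Tψ|²) ≥ (1/(1−λ))·log( c^{2λ} + (1−c²)^λ ), and this bound is tight: there exists a unit vector ψ attaining equality. -/
/-!
Rényi entropy is antitone in its index, so with `λ = max α β` it suffices to bound
`H_λ(|ψ|²) + H_λ(|Tψ|²)`, i.e. to show `P(c², 1 - c²) ≤ P(|ψ|²) · P(|Tψ|²)` for the power sum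
`P(p) = p₁^λ + p₂^λ`. Write the larger amplitudes of `ψ` and `Tψ` as `cos θ` and `cos φ` with
`θ, φ ∈ [0, π/4]`; the Landau–Pollak inequality gives `arccos c ≤ θ + φ`. For `λ ≤ 1/2` the
function `g(θ) = P(cos² θ, sin² θ)` is increasing on `[0, π/4]` and satisfies
`g(θ + φ) ≤ g(θ) g(φ)`, which yields the bound. If `|T_{lk}| = c`, it is attained by the basis
vector `e_k` when `λ = β` and by `Tᴴ e_l` when `λ = α`.
-/

open Real

/-- Power with the convention `0 ^ λ = 0` for all `λ ≥ 0`. -/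
noncomputable def pw (p lam : ℝ) : ℝ := if p = 0 then 0 else p ^ lam

/-- Rényi entropy of the two-point probability vector `(p₁, p₂)`:
`H_λ(p) = (1/(1-λ)) log (p₁^λ + p₂^λ)` for `λ ≠ 1`, Shannon entropy for `λ = 1`. -/
noncomputable def Hren (lam p1 p2 : ℝ) : ℝ :=
  if lam = 1 then -(p1 * Real.log p1 + p2 * Real.log p2)
  else (1 - lam)⁻¹ * Real.log (pw p1 lam + pw p2 lam)

section Pw

variable {p q lam : ℝ}

@[simp] lemma zero_pw (lam : ℝ) : pw 0 lam = 0 := if_pos rfl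

@[simp] lemma one_pw (lam : ℝ) : pw 1 lam = 1 := by simp [pw]

lemma pw_of_ne_zero (hp : p ≠ 0) : pw p lam = p ^ lam := if_neg hp

lemma pw_nonneg (hp : 0 ≤ p) : 0 ≤ pw p lam := by
  unfold pw; split_ifs
  exacts [le_rfl, rpow_nonneg hp lam]

lemma pw_le_pw (hp : 0 ≤ p) (hpq : p ≤ q) (hlam : 0 ≤ lam) : pw p lam ≤ pw q lam := by
  rcases hp.eq_or_lt with rfl | hp
  · simpa using pw_nonneg (lam := lam) hpq
  rw [pw_of_ne_zero hp.ne', pw_of_ne_zero (hp.trans_le hpq).ne']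
  exact rpow_le_rpow hp.le hpq hlam

lemma mul_pw (hp : 0 ≤ p) (hq : 0 ≤ q) : pw (p * q) lam = pw p lam * pw q lam := by
  rcases eq_or_ne p 0 with rfl | hp0
  · simp
  rcases eq_or_ne q 0 with rfl | hq0
  · simp
  rw [pw_of_ne_zero hp0, pw_of_ne_zero hq0, pw_of_ne_zero (mul_ne_zero hp0 hq0), mul_rpow hp hq]

lemma pw_sq (hp : 0 ≤ p) : pw (p ^ 2) lam = pw p (2 * lam) := by
  rcases eq_or_ne p 0 with rfl | hp0
  · simp
  rw [pw_of_ne_zero hp0, pw_of_ne_zero (pow_ne_zero 2 hp0), rpow_mul hp, rpow_two]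

/-- With the convention `0 ^ 0 = 0`, `pw · 0` is the indicator of `{x ≠ 0}`, which is still
concave on `[0, ∞)`; this is what lets the index `0` be treated together with the others. -/
lemma concaveOn_pw (h0 : 0 ≤ lam) (h1 : lam ≤ 1) : ConcaveOn ℝ (Set.Ici 0) (pw · lam) := by
  rcases h0.eq_or_lt with rfl | hpos
  · refine ⟨convex_Ici 0, fun x hx y hy a b ha hb hab => ?_⟩
    have hle : ∀ z, pw z 0 ≤ 1 := fun z => by unfold pw; split_ifs <;> simp
    have hvanish : ∀ {t z : ℝ}, t * z = 0 → t * pw z 0 = 0 := fun h => by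
      rcases mul_eq_zero.1 h with rfl | rfl <;> simp
    simp only [smul_eq_mul]
    by_cases hz : a * x + b * y = 0
    · obtain ⟨hax, hby⟩ := (add_eq_zero_iff_of_nonneg (mul_nonneg ha hx) (mul_nonneg hb hy)).1 hz
      simp [hz, hvanish hax, hvanish hby]
    · rw [pw_of_ne_zero hz, rpow_zero]
      nlinarith [hle x, hle y]
  · convert Real.concaveOn_rpow h0 h1 using 1
    funext x
    rcases eq_or_ne x 0 with rfl | hx
    · simp [zero_rpow hpos.ne']
    · exact pw_of_ne_zero hx

lemma pw_add_le_add_pw (hp : 0 ≤ p) (hq : 0 ≤ q) (h0 : 0 ≤ lam) (h1 : lam ≤ 1) :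
    pw (p + q) lam ≤ pw p lam + pw q lam := by
  rcases eq_or_ne p 0 with rfl | hp0
  · simp
  rcases eq_or_ne q 0 with rfl | hq0
  · simp
  rw [pw_of_ne_zero hp0, pw_of_ne_zero hq0, pw_of_ne_zero (by positivity)]
  exact rpow_add_le_add_rpow hp hq h0 h1

end Pw

noncomputable def powSum (lam p q : ℝ) : ℝ := pw p lam + pw q lam

section PowSum

variable {p q lam : ℝ}

lemma powSum_comm (lam p q : ℝ) : powSum lam p q = powSum lam q p := add_comm _ _

lemma one_le_powSum (hp : 0 ≤ p) (hq : 0 ≤ q) (hpq : p + q = 1) (h0 : 0 ≤ lam) (h1 : lam ≤ 1) :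
    1 ≤ powSum lam p q := by
  have h := pw_add_le_add_pw hp hq h0 h1
  rwa [hpq, one_pw] at h

lemma antitoneOn_powSum_one_sub (h0 : 0 ≤ lam) (h1 : lam ≤ 1) :
    AntitoneOn (fun p => powSum lam p (1 - p)) (Set.Icc (1 / 2) 1) := by
  intro p hp p' hp' hpp'
  obtain ⟨a, b, ha, hb, hab, rfl⟩ : p ∈ segment ℝ (1 - p') p' :=
    Icc_subset_segment ⟨by linarith [hp.1], hpp'⟩
  have hp'0 : 0 ≤ p' := by linarith [hp'.1]
  have hp'1 : 0 ≤ 1 - p' := by linarith [hp'.2]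
  have hsym : 1 - (a • (1 - p') + b • p') = a • p' + b • (1 - p') := by
    simp only [smul_eq_mul]; linear_combination -hab
  have h₁ := (concaveOn_pw h0 h1).2 hp'1 hp'0 ha hb hab
  have h₂ := (concaveOn_pw h0 h1).2 hp'0 hp'1 ha hb hab
  simp only [powSum, hsym]
  simp only [smul_eq_mul] at h₁ h₂ ⊢
  linear_combination h₁ + h₂ - (pw p' lam + pw (1 - p') lam) * hab

end PowSum

section Renyi

variable {α lam p q : ℝ}

lemma Hren_of_ne_one (h : lam ≠ 1) (p q : ℝ) :
    Hren lam p q = (1 - lam)⁻¹ * log (powSum lam p q) := if_neg h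

lemma Hren_comm (lam p q : ℝ) : Hren lam p q = Hren lam q p := by
  unfold Hren
  rw [add_comm (p * _), add_comm (pw p lam)]

@[simp] lemma Hren_one_zero (lam : ℝ) : Hren lam 1 0 = 0 := by
  unfold Hren; split_ifs <;> simp

lemma Hren_le_Hren_of_le (hα : α ≤ lam) (hlam : lam < 1) (hp : 0 ≤ p) (hq : 0 ≤ q)
    (hpq : p + q = 1) : Hren lam p q ≤ Hren α p q := by
  rcases hp.eq_or_lt with rfl | hp
  · obtain rfl : q = 1 := by linarith
    simp [Hren_comm _ 0]
  rcases hq.eq_or_lt with rfl | hq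
  · obtain rfl : p = 1 := by linarith
    simp
  rw [Hren_of_ne_one hlam.ne, Hren_of_ne_one (hα.trans_lt hlam).ne, powSum, powSum,
    pw_of_ne_zero hp.ne', pw_of_ne_zero hq.ne', pw_of_ne_zero hp.ne', pw_of_ne_zero hq.ne']
  have hα1 : 0 < 1 - α := by linarith
  have hlam1 : 0 < 1 - lam := by linarith
  set s := (1 - lam) / (1 - α) with hs
  have hs0 : 0 < s := div_pos (by linarith) hα1
  have hs1 : s ≤ 1 := (div_le_one hα1).2 (by linarith)
  -- `x ^ λ = x * (x ^ (α - 1)) ^ s`: Jensen for the concave `t ↦ t ^ s` with weights `p, q`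
  have hsplit : ∀ {x : ℝ}, 0 < x → x ^ lam = x * (x ^ (α - 1)) ^ s := fun hx => by
    rw [← rpow_mul hx.le, show (α - 1) * s = lam - 1 by rw [hs]; field_simp; ring,
      rpow_sub_one hx.ne', mul_div_cancel₀ _ hx.ne']
  have hsplitα : ∀ {x : ℝ}, 0 < x → x ^ α = x * x ^ (α - 1) := fun hx => by
    rw [rpow_sub_one hx.ne', mul_div_cancel₀ _ hx.ne']
  have hjensen : p ^ lam + q ^ lam ≤ (p ^ α + q ^ α) ^ s := by
    have := (concaveOn_rpow hs0.le hs1).2 (rpow_nonneg hp.le (α - 1)) (rpow_nonneg hq.le (α - 1))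
      hp.le hq.le hpq
    simpa only [smul_eq_mul, ← hsplit hp, ← hsplit hq, ← hsplitα hp, ← hsplitα hq] using this
  calc (1 - lam)⁻¹ * log (p ^ lam + q ^ lam)
      ≤ (1 - lam)⁻¹ * log ((p ^ α + q ^ α) ^ s) := by gcongr
    _ = (1 - α)⁻¹ * log (p ^ α + q ^ α) := by
        rw [log_rpow (by positivity), hs]
        field_simp

end Renyi

noncomputable def anglePowSum (lam θ : ℝ) : ℝ := powSum lam (cos θ ^ 2) (sin θ ^ 2)

section Angle

variable {lam θ φ γ : ℝ}

lemma anglePowSum_nonneg (lam θ : ℝ) : 0 ≤ anglePowSum lam θ :=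
  add_nonneg (pw_nonneg (sq_nonneg _)) (pw_nonneg (sq_nonneg _))

lemma anglePowSum_arccos {x : ℝ} (hx₀ : -1 ≤ x) (hx₁ : x ≤ 1) :
    anglePowSum lam (arccos x) = powSum lam (x ^ 2) (1 - x ^ 2) := by
  rw [anglePowSum, cos_arccos hx₀ hx₁, sin_arccos, sq_sqrt (by nlinarith)]

lemma monotoneOn_anglePowSum (h0 : 0 ≤ lam) (h1 : lam ≤ 1) :
    MonotoneOn (anglePowSum lam) (Set.Icc 0 (π / 4)) := by
  have hcos : ∀ θ ∈ Set.Icc 0 (π / 4), cos θ ^ 2 ∈ Set.Icc (1 / 2) 1 := fun θ hθ =>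
    ⟨by nlinarith [cos_sq θ, cos_nonneg_of_mem_Icc (x := 2 * θ) ⟨by linarith [pi_pos, hθ.1],
      by linarith [hθ.2]⟩], cos_sq_le_one θ⟩
  intro s hs t ht hst
  simp only [anglePowSum, sin_sq]
  refine antitoneOn_powSum_one_sub h0 h1 (hcos t ht) (hcos s hs) ?_
  rw [cos_sq s, cos_sq t]
  gcongr
  exact cos_le_cos_of_nonneg_of_le_pi (by linarith [hs.1]) (by linarith [ht.2, pi_pos])
    (by linarith)

lemma anglePowSum_add_le_mul (h0 : 0 ≤ lam) (h1 : lam ≤ 1 / 2) (hθ : 0 ≤ θ) (hφ : 0 ≤ φ)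
    (hθφ : θ + φ ≤ π / 2) :
    anglePowSum lam (θ + φ) ≤ anglePowSum lam θ * anglePowSum lam φ := by
  have hpi := pi_pos
  have hcθ : 0 ≤ cos θ := cos_nonneg_of_mem_Icc ⟨by linarith, by linarith⟩
  have hcφ : 0 ≤ cos φ := cos_nonneg_of_mem_Icc ⟨by linarith, by linarith⟩
  have hsθ : 0 ≤ sin θ := sin_nonneg_of_nonneg_of_le_pi hθ (by linarith)
  have hsφ : 0 ≤ sin φ := sin_nonneg_of_nonneg_of_le_pi hφ (by linarith)
  have hcos : pw (cos (θ + φ) ^ 2) lam ≤ pw (cos θ ^ 2) lam * pw (cos φ ^ 2) lam := by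
    rw [← mul_pw (sq_nonneg _) (sq_nonneg _), ← mul_pow]
    refine pw_le_pw (sq_nonneg _) (pow_le_pow_left₀ ?_ ?_ 2) h0
    · exact cos_nonneg_of_mem_Icc ⟨by linarith, by linarith⟩
    · rw [cos_add]; nlinarith [mul_nonneg hsθ hsφ]
  have hsin : pw (sin (θ + φ) ^ 2) lam ≤
      pw (sin θ ^ 2) lam * pw (cos φ ^ 2) lam + pw (cos θ ^ 2) lam * pw (sin φ ^ 2) lam := by
    rw [← mul_pw (sq_nonneg _) (sq_nonneg _), ← mul_pw (sq_nonneg _) (sq_nonneg _), ← mul_pow,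
      ← mul_pow, pw_sq (sin_nonneg_of_nonneg_of_le_pi (by linarith) (by linarith)),
      pw_sq (mul_nonneg hsθ hcφ), pw_sq (mul_nonneg hcθ hsφ), sin_add]
    exact pw_add_le_add_pw (mul_nonneg hsθ hcφ) (mul_nonneg hcθ hsφ) (by linarith) (by linarith)
  have hss : 0 ≤ pw (sin θ ^ 2) lam * pw (sin φ ^ 2) lam :=
    mul_nonneg (pw_nonneg (sq_nonneg _)) (pw_nonneg (sq_nonneg _))
  simp only [anglePowSum, powSum]
  nlinarith

lemma anglePowSum_le_mul_of_le_add (h0 : 0 ≤ lam) (h1 : lam ≤ 1 / 2) (hγ : 0 ≤ γ)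
    (hγθφ : γ ≤ θ + φ) (hθ : θ ∈ Set.Icc 0 (π / 4)) (hφ : φ ∈ Set.Icc 0 (π / 4)) :
    anglePowSum lam γ ≤ anglePowSum lam θ * anglePowSum lam φ := by
  -- split `γ = θ' + φ'` with `θ' ≤ θ` and `φ' ≤ φ`
  set θ' := min θ γ with hθ'
  have hφ'φ : γ - θ' ≤ φ := by
    rcases min_cases θ γ with ⟨h, -⟩ | ⟨h, -⟩ <;> rw [hθ', h] <;> linarith [hφ.1]
  have hθ'I : θ' ∈ Set.Icc 0 (π / 4) := ⟨le_min hθ.1 hγ, (min_le_left _ _).trans hθ.2⟩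
  have hφ'I : γ - θ' ∈ Set.Icc 0 (π / 4) := ⟨sub_nonneg.2 (min_le_right _ _), hφ'φ.trans hφ.2⟩
  have hmono := monotoneOn_anglePowSum h0 (by linarith)
  calc anglePowSum lam γ = anglePowSum lam (θ' + (γ - θ')) := by rw [add_sub_cancel]
    _ ≤ anglePowSum lam θ' * anglePowSum lam (γ - θ') :=
        anglePowSum_add_le_mul h0 h1 hθ'I.1 hφ'I.1 (by linarith [hθ'I.2, hφ'I.2])
    _ ≤ anglePowSum lam θ * anglePowSum lam φ :=
        mul_le_mul (hmono hθ'I hθ (min_le_left _ _)) (hmono hφ'I hφ hφ'φ)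
          (anglePowSum_nonneg _ _) (anglePowSum_nonneg _ _)

end Angle

/-- The algebraic core of the Landau–Pollak uncertainty relation. -/
lemma mul_le_add_mul_of_le_add_mul {a v b w d e c : ℝ} (ha : 0 ≤ a) (hv : 0 ≤ v) (hb : 0 ≤ b)
    (hw : 0 ≤ w) (hav : a ^ 2 + v ^ 2 = 1) (hbw : b ^ 2 + w ^ 2 = 1) (hde : d ^ 2 + e ^ 2 = 1)
    (hbde : b ≤ d * a + e * v) (hdc : d ≤ c) : a * b ≤ c + v * w := by
  have hsq : (a * e - v * d) ^ 2 ≤ w ^ 2 := by nlinarith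
  have hw' : a * e - v * d ≤ w := abs_le_of_sq_le_sq' hsq hw |>.2
  calc a * b ≤ a * (d * a + e * v) := mul_le_mul_of_nonneg_left hbde ha
    _ = d + v * (a * e - v * d) := by linear_combination d * hav
    _ ≤ c + v * w := add_le_add hdc (mul_le_mul_of_nonneg_left hw' hv)

lemma powSum_le_mul_of_mul_le_add {lam a v b w c : ℝ} (h0 : 0 ≤ lam) (h1 : lam ≤ 1 / 2)
    (hv : 0 ≤ v) (hva : v ≤ a) (hw : 0 ≤ w) (hwb : w ≤ b) (hav : a ^ 2 + v ^ 2 = 1)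
    (hbw : b ^ 2 + w ^ 2 = 1) (hc0 : 0 ≤ c) (hc1 : c ≤ 1) (habc : a * b ≤ c + v * w) :
    powSum lam (c ^ 2) (1 - c ^ 2) ≤ powSum lam (a ^ 2) (v ^ 2) * powSum lam (b ^ 2) (w ^ 2) := by
  have hangle : ∀ x y : ℝ, 0 ≤ y → y ≤ x → x ^ 2 + y ^ 2 = 1 →
      arccos x ∈ Set.Icc 0 (π / 4) ∧ cos (arccos x) = x ∧ sin (arccos x) = y ∧
        powSum lam (x ^ 2) (y ^ 2) = anglePowSum lam (arccos x) := fun x y hy hyx hxy => by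
    have hx1 : x ≤ 1 := by nlinarith
    have hsqrt2 : √2 / 2 ≤ x := by nlinarith [sq_sqrt (zero_le_two (α := ℝ)), sqrt_nonneg 2]
    refine ⟨⟨arccos_nonneg _, arccos_le_pi_div_four.2 hsqrt2⟩, cos_arccos (by linarith) hx1, ?_, ?_⟩
    · rw [sin_arccos, show 1 - x ^ 2 = y ^ 2 by linarith, sqrt_sq hy]
    · rw [anglePowSum_arccos (by linarith) hx1, show 1 - x ^ 2 = y ^ 2 by linarith]
  obtain ⟨hθ, hcθ, hsθ, hpθ⟩ := hangle a v hv hva hav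
  obtain ⟨hφ, hcφ, hsφ, hpφ⟩ := hangle b w hw hwb hbw
  rw [← anglePowSum_arccos (by linarith) hc1, hpθ, hpφ]
  refine anglePowSum_le_mul_of_le_add h0 h1 (arccos_nonneg c) ?_ hθ hφ
  calc arccos c ≤ arccos (cos (arccos a + arccos b)) :=
        arccos_le_arccos (by rw [cos_add, hcθ, hcφ, hsθ, hsφ]; linarith)
    _ = arccos a + arccos b :=
        arccos_cos (by linarith [hθ.1, hφ.1]) (by linarith [hθ.2, hφ.2, pi_pos])

section Unitary

open Matrix

variable {n 𝕜 : Type*} [Fintype n] [DecidableEq n] [RCLike 𝕜] {U : Matrix n n 𝕜}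

lemma sum_norm_sq_mulVec_of_mem_unitaryGroup (hU : U ∈ unitaryGroup n 𝕜) (ψ : n → 𝕜) :
    ∑ j, ‖(U *ᵥ ψ) j‖ ^ 2 = ∑ j, ‖ψ j‖ ^ 2 := by
  have hnorm : ∀ x : n → 𝕜, star x ⬝ᵥ x = ((∑ j, ‖x j‖ ^ 2 : ℝ) : 𝕜) := fun x => by
    simp [dotProduct, RCLike.conj_mul]
  have h : star (U *ᵥ ψ) ⬝ᵥ (U *ᵥ ψ) = star ψ ⬝ᵥ ψ := by
    rw [star_mulVec, ← dotProduct_mulVec, mulVec_mulVec, ← star_eq_conjTranspose, hU.1,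
      one_mulVec]
  exact_mod_cast (hnorm _).symm.trans (h.trans (hnorm ψ))

lemma sum_norm_sq_single (i : n) : ∑ j, ‖(Pi.single i (1 : 𝕜) : n → 𝕜) j‖ ^ 2 = 1 := by
  simp [Pi.single_apply, apply_ite (fun z : 𝕜 => ‖z‖ ^ 2)]

lemma sum_norm_sq_row_of_mem_unitaryGroup (hU : U ∈ unitaryGroup n 𝕜) (j : n) :
    ∑ k, ‖U j k‖ ^ 2 = 1 := by
  simpa [mulVec_single_one, sum_norm_sq_single] using
    sum_norm_sq_mulVec_of_mem_unitaryGroup (Unitary.star_mem hU) (Pi.single j 1)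

end Unitary

section FinTwo

open Matrix

lemma sum_fin_two_eq_add_rev {M : Type*} [AddCommMonoid M] (f : Fin 2 → M) (i : Fin 2) :
    ∑ k, f k = f i + f i.rev := by
  fin_cases i <;> simp [Fin.sum_univ_two, add_comm]

lemma powSum_rev (lam : ℝ) (f : Fin 2 → ℝ) (i : Fin 2) :
    powSum lam (f i) (f i.rev) = powSum lam (f 0) (f 1) := by
  fin_cases i
  exacts [rfl, powSum_comm _ _ _]

lemma Hren_eq_of_norm_eq (lam : ℝ) {f : Fin 2 → ℂ} (hf : ∑ k, ‖f k‖ ^ 2 = 1) {i : Fin 2} {c : ℝ}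
    (hi : ‖f i‖ = c) : Hren lam (‖f 0‖ ^ 2) (‖f 1‖ ^ 2) = Hren lam (c ^ 2) (1 - c ^ 2) := by
  rw [sum_fin_two_eq_add_rev _ i] at hf
  rw [← hi, show 1 - ‖f i‖ ^ 2 = ‖f i.rev‖ ^ 2 by linarith]
  fin_cases i
  exacts [rfl, Hren_comm _ _ _]

lemma Hren_single (lam : ℝ) (k : Fin 2) :
    Hren lam (‖(Pi.single k 1 : Fin 2 → ℂ) 0‖ ^ 2) (‖(Pi.single k 1 : Fin 2 → ℂ) 1‖ ^ 2) = 0 := by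
  rw [Hren_eq_of_norm_eq lam (sum_norm_sq_single k) (i := k) (c := 1) (by simp)]
  simp

variable {T : Matrix (Fin 2) (Fin 2) ℂ} {c : ℝ} {k l : Fin 2}

lemma Hren_add_Hren_mulVec_single (hT : T ∈ unitaryGroup (Fin 2) ℂ) (hc : ‖T l k‖ = c)
    (α β : ℝ) :
    Hren α (‖(Pi.single k 1 : Fin 2 → ℂ) 0‖ ^ 2) (‖(Pi.single k 1 : Fin 2 → ℂ) 1‖ ^ 2) +
      Hren β (‖(T *ᵥ Pi.single k 1) 0‖ ^ 2) (‖(T *ᵥ Pi.single k 1) 1‖ ^ 2) =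
      Hren β (c ^ 2) (1 - c ^ 2) := by
  rw [Hren_single, zero_add]
  exact Hren_eq_of_norm_eq β ((sum_norm_sq_mulVec_of_mem_unitaryGroup hT _).trans
    (sum_norm_sq_single k)) (i := l) (by simp [hc])

lemma Hren_add_Hren_mulVec_star_mulVec_single (hT : T ∈ unitaryGroup (Fin 2) ℂ)
    (hc : ‖T l k‖ = c) (α β : ℝ) :
    Hren α (‖(star T *ᵥ Pi.single l 1) 0‖ ^ 2) (‖(star T *ᵥ Pi.single l 1) 1‖ ^ 2) +
      Hren β (‖(T *ᵥ (star T *ᵥ Pi.single l 1)) 0‖ ^ 2)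
        (‖(T *ᵥ (star T *ᵥ Pi.single l 1)) 1‖ ^ 2) =
      Hren α (c ^ 2) (1 - c ^ 2) := by
  rw [mulVec_mulVec, hT.2, one_mulVec, Hren_single, add_zero]
  exact Hren_eq_of_norm_eq α ((sum_norm_sq_mulVec_of_mem_unitaryGroup (Unitary.star_mem hT) _).trans
    (sum_norm_sq_single l)) (i := k) (by simp [hc])

variable {ψ : Fin 2 → ℂ}

lemma norm_mul_norm_mulVec_le (hT : T ∈ unitaryGroup (Fin 2) ℂ) (hc : ∀ k l, ‖T l k‖ ≤ c)
    (hψ : ∑ k, ‖ψ k‖ ^ 2 = 1) (i j : Fin 2) :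
    ‖ψ i‖ * ‖(T *ᵥ ψ) j‖ ≤ c + ‖ψ i.rev‖ * ‖(T *ᵥ ψ) j.rev‖ := by
  have hTψ := (sum_norm_sq_mulVec_of_mem_unitaryGroup hT ψ).trans hψ
  have hrow := sum_norm_sq_row_of_mem_unitaryGroup hT j
  rw [sum_fin_two_eq_add_rev _ i] at hψ hrow
  rw [sum_fin_two_eq_add_rev _ j] at hTψ
  refine mul_le_add_mul_of_le_add_mul (norm_nonneg _) (norm_nonneg _) (norm_nonneg _)
    (norm_nonneg _) hψ hTψ hrow ?_ (hc i j)
  calc ‖(T *ᵥ ψ) j‖ = ‖T j i * ψ i + T j i.rev * ψ i.rev‖ := by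
        rw [mulVec, dotProduct, sum_fin_two_eq_add_rev _ i]
    _ ≤ ‖T j i‖ * ‖ψ i‖ + ‖T j i.rev‖ * ‖ψ i.rev‖ := by
        rw [← norm_mul, ← norm_mul]
        exact norm_add_le _ _

lemma powSum_le_mul_powSum_mulVec (hT : T ∈ unitaryGroup (Fin 2) ℂ) (hc : ∀ k l, ‖T l k‖ ≤ c)
    (hc1 : c ≤ 1) {lam : ℝ} (h0 : 0 ≤ lam) (h1 : lam ≤ 1 / 2) (hψ : ∑ k, ‖ψ k‖ ^ 2 = 1) :
    powSum lam (c ^ 2) (1 - c ^ 2) ≤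
      powSum lam (‖ψ 0‖ ^ 2) (‖ψ 1‖ ^ 2) * powSum lam (‖(T *ᵥ ψ) 0‖ ^ 2) (‖(T *ᵥ ψ) 1‖ ^ 2) := by
  obtain ⟨i, hi⟩ := Finite.exists_max fun k => ‖ψ k‖
  obtain ⟨j, hj⟩ := Finite.exists_max fun k => ‖(T *ᵥ ψ) k‖
  have hψi := (sum_fin_two_eq_add_rev _ i).symm.trans hψ
  have hTψj := (sum_fin_two_eq_add_rev _ j).symm.trans
    ((sum_norm_sq_mulVec_of_mem_unitaryGroup hT ψ).trans hψ)
  rw [← powSum_rev lam (fun k => ‖ψ k‖ ^ 2) i, ← powSum_rev lam (fun k => ‖(T *ᵥ ψ) k‖ ^ 2) j]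
  exact powSum_le_mul_of_mul_le_add h0 h1 (norm_nonneg _) (hi _) (norm_nonneg _) (hj _) hψi hTψj
    ((norm_nonneg _).trans (hc 0 0)) hc1 (norm_mul_norm_mulVec_le hT hc hψ i j)

lemma Hren_le_Hren_add_Hren_mulVec (hT : T ∈ unitaryGroup (Fin 2) ℂ) (hc : ∀ k l, ‖T l k‖ ≤ c)
    (hc1 : c ≤ 1) {lam : ℝ} (h0 : 0 ≤ lam) (h1 : lam ≤ 1 / 2) (hψ : ∑ k, ‖ψ k‖ ^ 2 = 1) :
    Hren lam (c ^ 2) (1 - c ^ 2) ≤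
      Hren lam (‖ψ 0‖ ^ 2) (‖ψ 1‖ ^ 2) + Hren lam (‖(T *ᵥ ψ) 0‖ ^ 2) (‖(T *ᵥ ψ) 1‖ ^ 2) := by
  have hc0 : 0 ≤ c := (norm_nonneg _).trans (hc 0 0)
  have hpos : ∀ {p q : ℝ}, 0 ≤ p → 0 ≤ q → p + q = 1 → 0 < powSum lam p q := fun hp hq hpq =>
    one_pos.trans_le (one_le_powSum hp hq hpq h0 (by linarith))
  have hψ' := (Fin.sum_univ_two _).symm.trans hψ
  have hTψ := (Fin.sum_univ_two _).symm.trans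
    ((sum_norm_sq_mulVec_of_mem_unitaryGroup hT ψ).trans hψ)
  have hlam : 0 < 1 - lam := by linarith
  simp only [Hren_of_ne_one (show lam ≠ 1 by linarith)]
  rw [← mul_add, ← log_mul (hpos (sq_nonneg _) (sq_nonneg _) hψ').ne'
    (hpos (sq_nonneg _) (sq_nonneg _) hTψ).ne']
  gcongr
  · exact hpos (sq_nonneg _) (by nlinarith) (by ring)
  · exact powSum_le_mul_powSum_mulVec hT hc hc1 h0 h1 hψ

end FinTwo

/-- analytical tight bound for indices in the square `[0, 1/2]²`
(Corollary 1). -/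
theorem stmt_3 (T : Matrix (Fin 2) (Fin 2) ℂ)
    (hT : T ∈ Matrix.unitaryGroup (Fin 2) ℂ)
    (c : ℝ)
    (hc : IsGreatest {x : ℝ | ∃ k l : Fin 2, x = ‖T l k‖} c)
    (α β : ℝ) (hα : α ∈ Set.Icc (0 : ℝ) (1 / 2)) (hβ : β ∈ Set.Icc (0 : ℝ) (1 / 2))
    (lam : ℝ) (hlam : lam = max α β) :
    (∀ ψ : Fin 2 → ℂ, ‖ψ 0‖ ^ 2 + ‖ψ 1‖ ^ 2 = 1 →
      (1 - lam)⁻¹ * Real.log (pw (c ^ 2) lam + pw (1 - c ^ 2) lam) ≤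
        Hren α (‖ψ 0‖ ^ 2) (‖ψ 1‖ ^ 2) +
          Hren β (‖T.mulVec ψ 0‖ ^ 2) (‖T.mulVec ψ 1‖ ^ 2)) ∧
    (∃ ψ : Fin 2 → ℂ, ‖ψ 0‖ ^ 2 + ‖ψ 1‖ ^ 2 = 1 ∧
      Hren α (‖ψ 0‖ ^ 2) (‖ψ 1‖ ^ 2) +
        Hren β (‖T.mulVec ψ 0‖ ^ 2) (‖T.mulVec ψ 1‖ ^ 2) =
        (1 - lam)⁻¹ * Real.log (pw (c ^ 2) lam + pw (1 - c ^ 2) lam)) := by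
  obtain ⟨hα0, hα2⟩ := hα
  obtain ⟨hβ0, hβ2⟩ := hβ
  have hαlam : α ≤ lam := hlam ▸ le_max_left α β
  have hβlam : β ≤ lam := hlam ▸ le_max_right α β
  have hlam0 : 0 ≤ lam := hα0.trans hαlam
  have hlam2 : lam ≤ 1 / 2 := hlam ▸ max_le hα2 hβ2
  obtain ⟨⟨k, l, hckl⟩, hmax⟩ := hc
  have hle : ∀ k l, ‖T l k‖ ≤ c := fun k l => hmax ⟨k, l, rfl⟩
  have hc1 : c ≤ 1 := hckl ▸ entry_norm_bound_of_unitary hT l k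
  have hbound : (1 - lam)⁻¹ * log (pw (c ^ 2) lam + pw (1 - c ^ 2) lam) =
      Hren lam (c ^ 2) (1 - c ^ 2) := (Hren_of_ne_one (by linarith) _ _).symm
  rw [hbound]
  refine ⟨fun ψ hψ => ?_, ?_⟩
  · have hψ' : ∑ k, ‖ψ k‖ ^ 2 = 1 := (Fin.sum_univ_two _).trans hψ
    have hTψ := (sum_norm_sq_mulVec_of_mem_unitaryGroup hT ψ).trans hψ'
    rw [Fin.sum_univ_two] at hTψ
    refine (Hren_le_Hren_add_Hren_mulVec hT hle hc1 hlam0 hlam2 hψ').trans (add_le_add ?_ ?_)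
    · exact Hren_le_Hren_of_le hαlam (by linarith) (sq_nonneg _) (sq_nonneg _) hψ
    · exact Hren_le_Hren_of_le hβlam (by linarith) (sq_nonneg _) (sq_nonneg _) hTψ
  · rcases le_total α β with hαβ | hβα
    · refine ⟨Pi.single k 1, by simpa [Fin.sum_univ_two] using sum_norm_sq_single k, ?_⟩
      rw [hlam, max_eq_right hαβ]
      exact Hren_add_Hren_mulVec_single hT hckl.symm α β
    · have hrow := (sum_norm_sq_mulVec_of_mem_unitaryGroup (Unitary.star_mem hT)
        (Pi.single l 1)).trans (sum_norm_sq_single l)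
      refine ⟨(star T).mulVec (Pi.single l 1), (Fin.sum_univ_two _).symm.trans hrow, ?_⟩
      rw [hlam, max_eq_left hβα]
      exact Hren_add_Hren_mulVec_star_mulVec_single hT hckl.symm α β
end

section
/- Let T = Φ(u) V(γ_T) Φ(v) be a 2×2 unitary matrix (Φ(x) = diag(e^{ix₁}, e^{ix₂}), V(γ_T) = [[cos γ_T, sin γ_T], [−sin γ_T, cos γ_T]], γ_T ∈ [0, π/2]), with overlap c and γ = min(γ_T, π/2 − γ_T) = arccos c ∈ [0, π/4]. Let θ₀ ∈ [0, γ], ε = 1 if γ_T ≤ π/4 and ε = −1 otherwise, n ∈ {0,1}, φ ∈ ℝ, and set ψ = e^{iφ} Φ(−v) · (cos(ε θ₀ + nπ/2), sin(ε θ₀ + nπ/2))ᵗ. Then the probability vectors P^A = |ψ|² and P^B = |Tψ|² satisfy arccos(√(max_k P^A_k)) + arccos(√(max_l P^B_l)) = arccos c, i.e., these states saturate the Landau–Pollak inequality. -/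
open Real

/-- `Φ(x) = diag(e^{i x₁}, e^{i x₂})`. -/
noncomputable def PhiM (x : Fin 2 → ℝ) : Matrix (Fin 2) (Fin 2) ℂ :=
  Matrix.diagonal fun k => Complex.exp (Complex.I * (x k : ℂ))

/-- `V(γ) = [[cos γ, sin γ], [−sin γ, cos γ]]`. -/
noncomputable def Vrot (g : ℝ) : Matrix (Fin 2) (Fin 2) ℂ :=
  !![(Real.cos g : ℂ), (Real.sin g : ℂ); (-Real.sin g : ℂ), (Real.cos g : ℂ)]

/-!
Up to a global phase and the diagonal phases `Φ(±v)`, `Φ(u)`, which do not change moduli of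
coordinates, `ψ` is the real state `(cos θ, sin θ)` with `θ = εθ₀ + nπ/2`, and `T` maps it to the
real state of angle `θ - γ_T`. For a real state of angle `θ` the quantity
`arccos √(max_k P_k)` is `π/2`-periodic and even in `θ` and equals `|θ|` for `|θ| ≤ π/4`.
The sign `ε` is chosen so that `εθ₀` and `εθ₀ - γ_T` reduce to angles of opposite signs
whose distance is `γ`, so the two terms add up to `γ = arccos c`.
-/

open Matrix

noncomputable section

def maxProbAngle (ψ : Fin 2 → ℂ) : ℝ :=
  arccos (√(max (‖ψ 0‖ ^ 2) (‖ψ 1‖ ^ 2)))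

def realState (θ : ℝ) : Fin 2 → ℂ :=
  ![(cos θ : ℂ), (sin θ : ℂ)]

end

lemma maxProbAngle_realState (θ : ℝ) :
    maxProbAngle (realState θ) = arccos (√(max (cos θ ^ 2) (sin θ ^ 2))) := by
  simp only [maxProbAngle, realState, cons_val_zero, cons_val_one, cons_val_fin_one,
    Complex.norm_real, norm_eq_abs, sq_abs]

lemma maxProbAngle_realState_add_pi_div_two (θ : ℝ) :
    maxProbAngle (realState (θ + π / 2)) = maxProbAngle (realState θ) := by
  rw [maxProbAngle_realState, maxProbAngle_realState, cos_add_pi_div_two, sin_add_pi_div_two,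
    neg_sq, max_comm]

lemma maxProbAngle_realState_add_nat_mul_pi_div_two (θ : ℝ) (n : ℕ) :
    maxProbAngle (realState (θ + n * (π / 2))) = maxProbAngle (realState θ) := by
  induction n with
  | zero => simp
  | succ n ih =>
    rw [Nat.cast_succ, add_one_mul, ← add_assoc, maxProbAngle_realState_add_pi_div_two, ih]

lemma maxProbAngle_realState_neg (θ : ℝ) :
    maxProbAngle (realState (-θ)) = maxProbAngle (realState θ) := by
  rw [maxProbAngle_realState, maxProbAngle_realState, cos_neg, sin_neg, neg_sq]

lemma maxProbAngle_realState_of_abs_le {θ : ℝ} (h : |θ| ≤ π / 4) :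
    maxProbAngle (realState θ) = |θ| := by
  obtain ⟨hlo, hhi⟩ := abs_le.mp h
  have hcos_nonneg : 0 ≤ cos θ := cos_nonneg_of_mem_Icc ⟨by linarith [pi_pos], by linarith⟩
  -- `cos² θ - sin² θ = cos 2θ ≥ 0` because `|2θ| ≤ π/2`
  have hsin_le_cos : sin θ ^ 2 ≤ cos θ ^ 2 := by
    have := cos_nonneg_of_mem_Icc (x := 2 * θ) ⟨by linarith, by linarith⟩
    linarith [cos_two_mul θ, sin_sq_add_cos_sq θ]
  rw [maxProbAngle_realState, max_eq_left hsin_le_cos, sqrt_sq hcos_nonneg, ← cos_abs,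
    arccos_cos (abs_nonneg θ) (by linarith [pi_pos])]

lemma maxProbAngle_realState_add_sub_eq_min {γT θ₀ ε : ℝ} (hγT : γT ∈ Set.Icc 0 (π / 2))
    (hθ₀ : θ₀ ∈ Set.Icc 0 (min γT (π / 2 - γT))) (hε : ε = if γT ≤ π / 4 then 1 else -1) :
    maxProbAngle (realState (ε * θ₀)) + maxProbAngle (realState (ε * θ₀ - γT)) =
      min γT (π / 2 - γT) := by
  obtain ⟨hγT₀, hγT₁⟩ := hγT
  obtain ⟨hθ₀, hθ₀γ⟩ := hθ₀
  by_cases hle : γT ≤ π / 4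
  · rw [min_eq_left (by linarith)] at hθ₀γ ⊢
    rw [hε, if_pos hle, one_mul,
      maxProbAngle_realState_of_abs_le (abs_le.mpr ⟨by linarith, by linarith⟩),
      maxProbAngle_realState_of_abs_le (abs_le.mpr ⟨by linarith, by linarith⟩),
      abs_of_nonneg hθ₀, abs_of_nonpos (by linarith)]
    ring
  · rw [min_eq_right (by linarith)] at hθ₀γ ⊢
    rw [hε, if_neg hle, neg_one_mul, show -θ₀ - γT = -((θ₀ + γT - π / 2) + π / 2) by ring,
      maxProbAngle_realState_neg, maxProbAngle_realState_neg,
      maxProbAngle_realState_add_pi_div_two,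
      maxProbAngle_realState_of_abs_le (abs_le.mpr ⟨by linarith, by linarith⟩),
      maxProbAngle_realState_of_abs_le (abs_le.mpr ⟨by linarith, by linarith⟩),
      abs_of_nonneg hθ₀, abs_of_nonpos (by linarith)]
    ring

lemma PhiM_mul_PhiM_neg (x : Fin 2 → ℝ) : PhiM x * PhiM (-x) = 1 := by
  simp only [PhiM, diagonal_mul_diagonal, ← Complex.exp_add, Pi.neg_apply,
    Complex.ofReal_neg, mul_neg, add_neg_cancel, Complex.exp_zero, diagonal_one]

lemma Vrot_mulVec_realState (g θ : ℝ) : Vrot g *ᵥ realState θ = realState (θ - g) := by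
  ext i
  fin_cases i <;>
  · simp [Vrot, realState, mulVec, cos_sub, sin_sub]
    ring

lemma maxProbAngle_smul_PhiM_mulVec {z : ℂ} (hz : ‖z‖ = 1) (x : Fin 2 → ℝ)
    (w : Fin 2 → ℂ) : maxProbAngle (z • (PhiM x *ᵥ w)) = maxProbAngle w := by
  have hnorm (k : Fin 2) : ‖(z • (PhiM x *ᵥ w)) k‖ = ‖w k‖ := by
    simp only [Pi.smul_apply, PhiM, mulVec_diagonal, smul_eq_mul, norm_mul, hz,
      Complex.norm_exp_I_mul_ofReal, one_mul]
  rw [maxProbAngle, maxProbAngle, hnorm, hnorm]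

theorem stmt_6_general (u v : Fin 2 → ℝ) (γT : ℝ)
    (hγT : γT ∈ Set.Icc 0 (Real.pi / 2))
    (T : Matrix (Fin 2) (Fin 2) ℂ)
    (hTdec : T = PhiM u * Vrot γT * PhiM v)
    (γ : ℝ) (hγ : γ = min γT (Real.pi / 2 - γT))
    (c : ℝ) (hγc : γ = Real.arccos c)
    (θ₀ : ℝ) (hθ₀ : θ₀ ∈ Set.Icc 0 γ)
    (ε : ℝ) (hε : ε = if γT ≤ Real.pi / 4 then (1 : ℝ) else -1)
    (n : ℕ) (φ : ℝ)
    (ψ : Fin 2 → ℂ)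
    (hψ : ψ = fun k =>
      Complex.exp (Complex.I * (φ : ℂ)) *
        (PhiM (-v)).mulVec
          ![(Real.cos (ε * θ₀ + n * (Real.pi / 2)) : ℂ),
            (Real.sin (ε * θ₀ + n * (Real.pi / 2)) : ℂ)] k) :
    Real.arccos (Real.sqrt (max (‖ψ 0‖ ^ 2) (‖ψ 1‖ ^ 2))) +
      Real.arccos (Real.sqrt (max (‖T.mulVec ψ 0‖ ^ 2)
        (‖T.mulVec ψ 1‖ ^ 2))) = Real.arccos c := by
  set z := Complex.exp (Complex.I * (φ : ℂ))
  have hz : ‖z‖ = 1 := Complex.norm_exp_I_mul_ofReal φ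
  have hψ' : ψ = z • (PhiM (-v) *ᵥ realState (ε * θ₀ + n * (π / 2))) := hψ
  have hTψ : T *ᵥ ψ = z • (PhiM u *ᵥ realState (ε * θ₀ - γT + n * (π / 2))) := by
    rw [hψ', mulVec_smul, hTdec, mulVec_mulVec, Matrix.mul_assoc, PhiM_mul_PhiM_neg,
      Matrix.mul_one, ← mulVec_mulVec, Vrot_mulVec_realState, add_sub_right_comm]
  change maxProbAngle ψ + maxProbAngle (T *ᵥ ψ) = _
  rw [hTψ, hψ', maxProbAngle_smul_PhiM_mulVec hz, maxProbAngle_smul_PhiM_mulVec hz,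
    maxProbAngle_realState_add_nat_mul_pi_div_two, maxProbAngle_realState_add_nat_mul_pi_div_two,
    ← hγc, hγ]
  exact maxProbAngle_realState_add_sub_eq_min hγT (hγ ▸ hθ₀) hε

/-- the optimal states saturate the Landau–Pollak inequality. -/
theorem stmt_6 (u v : Fin 2 → ℝ) (γT : ℝ)
    (hγT : γT ∈ Set.Icc 0 (Real.pi / 2))
    (T : Matrix (Fin 2) (Fin 2) ℂ)
    (hTdec : T = PhiM u * Vrot γT * PhiM v)
    (γ : ℝ) (hγ : γ = min γT (Real.pi / 2 - γT))
    (c : ℝ) (hc : c = Real.cos γ) (hγc : γ = Real.arccos c)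
    (θ₀ : ℝ) (hθ₀ : θ₀ ∈ Set.Icc 0 γ)
    (ε : ℝ) (hε : ε = if γT ≤ Real.pi / 4 then (1 : ℝ) else -1)
    (n : ℕ) (hn : n = 0 ∨ n = 1) (φ : ℝ)
    (ψ : Fin 2 → ℂ)
    (hψ : ψ = fun k =>
      Complex.exp (Complex.I * (φ : ℂ)) *
        (PhiM (-v)).mulVec
          ![(Real.cos (ε * θ₀ + n * (Real.pi / 2)) : ℂ),
            (Real.sin (ε * θ₀ + n * (Real.pi / 2)) : ℂ)] k) :
    Real.arccos (Real.sqrt (max (‖ψ 0‖ ^ 2) (‖ψ 1‖ ^ 2))) +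
      Real.arccos (Real.sqrt (max (‖T.mulVec ψ 0‖ ^ 2)
        (‖T.mulVec ψ 1‖ ^ 2))) = Real.arccos c :=
  stmt_6_general u v γT hγT T hTdec γ hγ c hγc θ₀ hθ₀ ε hε n φ ψ hψ
end

section
/- Let γ, θ ∈ [0, π/4], β ≥ 0, and t ∈ [0, 1]. Define the probability vector z = ( t·cos²(γ−θ) + (1−t)·cos²(γ+θ), t·sin²(γ−θ) + (1−t)·sin²(γ+θ) ). Then H_β(z) ≥ H_β((cos²(γ−θ), sin²(γ−θ))), with equality at t = 1; i.e., the minimum of H_β over the segment joining (cos²(γ−θ), sin²(γ−θ)) and (cos²(γ+θ), sin²(γ+θ)) is H_β((cos²(γ−θ), sin²(γ−θ))). -/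
/-!
If `f` is concave on `[0, ∞)` and `(x, y)` is a probability vector, then
`f x + f y ≤ f p + f (1 - p)` for every `p` between `x` and `y`: add the concavity inequalities at
`p = u x + v y` and at its reflection `1 - p = v x + u y`. Applied to `negMulLog` and to `p ↦ p ^ β`
(concave for `β ≤ 1`, convex for `β ≥ 1`, where the sign of `1 / (1 - β)` flips too), this says that
`H_β(p, 1 - p)` decreases as `p` moves away from `1/2`. For `γ, θ ∈ [0, π/4]` the identities
`cos²(γ - θ) - cos²(γ + θ) = sin 2γ sin 2θ` and `cos²(γ + θ) - sin²(γ - θ) = cos 2γ cos 2θ` put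
`cos²(γ + θ)`, hence the whole segment, between `sin²(γ - θ)` and `cos²(γ - θ)`.
-/

open Real

open Set

theorem ConcaveOn.add_le_add_of_mem_segment {s : Set ℝ} {f : ℝ → ℝ} (hf : ConcaveOn ℝ s f)
    {x y p q : ℝ} (hx : x ∈ s) (hy : y ∈ s) (hp : p ∈ segment ℝ x y) (hpq : p + q = x + y) :
    f x + f y ≤ f p + f q := by
  obtain ⟨u, v, hu, hv, huv, rfl⟩ := hp
  have hq : q = v • x + u • y := by
    simp only [smul_eq_mul] at hpq ⊢
    linear_combination hpq - (x + y) * huv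
  have hfp := hf.2 hx hy hu hv huv
  have hfq := hf.2 hx hy hv hu (by rw [add_comm, huv])
  rw [hq]
  simp only [smul_eq_mul] at hfp hfq
  linear_combination hfp + hfq - (f x + f y) * huv

theorem ConvexOn.add_le_add_of_mem_segment {s : Set ℝ} {f : ℝ → ℝ} (hf : ConvexOn ℝ s f)
    {x y p q : ℝ} (hx : x ∈ s) (hy : y ∈ s) (hp : p ∈ segment ℝ x y) (hpq : p + q = x + y) :
    f p + f q ≤ f x + f y := by
  have := hf.neg.add_le_add_of_mem_segment hx hy hp hpq
  simp only [Pi.neg_apply] at this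
  linarith

section pw

variable {x β : ℝ}

theorem pw_eq_rpow (hβ : β ≠ 0) (x : ℝ) : pw x β = x ^ β := by
  unfold pw
  split_ifs with hx
  · rw [hx, zero_rpow hβ]
  · rfl

theorem pw_nonneg_s9 (hx : 0 ≤ x) : 0 ≤ pw x β := by
  unfold pw
  split_ifs
  exacts [le_rfl, rpow_nonneg hx β]

theorem pw_pos (hx : 0 < x) : 0 < pw x β := by
  rw [pw, if_neg hx.ne']
  exact rpow_pos_of_pos hx β

theorem pw_add_pw_pos {y : ℝ} (hx : 0 ≤ x) (hy : 0 ≤ y) (hxy : x + y = 1) :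
    0 < pw x β + pw y β := by
  rcases hx.lt_or_eq with hx | rfl
  · exact add_pos_of_pos_of_nonneg (pw_pos hx) (pw_nonneg_s9 hy)
  · rw [zero_add] at hxy
    exact add_pos_of_nonneg_of_pos (pw_nonneg_s9 le_rfl) (pw_pos (by rw [hxy]; exact one_pos))

/-- With the convention `0 ^ 0 = 0` this is the indicator of `x ≠ 0`; it is concave on `[0, ∞)`
because a convex combination of nonnegative numbers vanishes only if each weighted term does. -/
theorem concaveOn_pw_zero : ConcaveOn ℝ (Ici 0) (pw · 0) := by
  refine ⟨convex_Ici 0, fun a ha b hb u v hu hv huv => ?_⟩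
  simp only [pw, rpow_zero, smul_eq_mul]
  by_cases h : u * a + v * b = 0
  · have hua : u * a = 0 := by
      linarith [mul_nonneg hu (mem_Ici.1 ha), mul_nonneg hv (mem_Ici.1 hb)]
    have hvb : v * b = 0 := by linarith
    rw [if_pos h]
    rcases mul_eq_zero.1 hua with hu0 | ha0 <;> rcases mul_eq_zero.1 hvb with hv0 | hb0 <;>
      simp_all
  · rw [if_neg h]
    calc u * (if a = 0 then 0 else 1) + v * (if b = 0 then 0 else 1) ≤ u * 1 + v * 1 := by
          gcongr <;> split_ifs <;> norm_num
      _ = 1 := by rw [mul_one, mul_one, huv]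

theorem concaveOn_pw_s9 (hβ₀ : 0 ≤ β) (hβ₁ : β ≤ 1) : ConcaveOn ℝ (Ici 0) (pw · β) := by
  rcases hβ₀.eq_or_lt with rfl | hβ₀
  · exact concaveOn_pw_zero
  · exact (Real.concaveOn_rpow hβ₀.le hβ₁).congr fun x _ => (pw_eq_rpow hβ₀.ne' x).symm

theorem convexOn_pw (hβ : 1 ≤ β) : ConvexOn ℝ (Ici 0) (pw · β) :=
  (convexOn_rpow hβ).congr fun x _ => (pw_eq_rpow (by linarith) x).symm

end pw

theorem Hren_one (x y : ℝ) : Hren 1 x y = negMulLog x + negMulLog y := by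
  simp only [Hren, if_pos, negMulLog]
  ring

theorem Hren_of_ne_one_s9 {β : ℝ} (hβ : β ≠ 1) (x y : ℝ) :
    Hren β x y = (1 - β)⁻¹ * log (pw x β + pw y β) :=
  if_neg hβ

theorem Hren_le_of_mem_segment {β x y p : ℝ} (hβ : 0 ≤ β) (hx : 0 ≤ x) (hy : 0 ≤ y)
    (hxy : x + y = 1) (hp : p ∈ segment ℝ x y) : Hren β x y ≤ Hren β p (1 - p) := by
  have hpq : p + (1 - p) = x + y := by rw [hxy]; ring
  have hp0 : 0 ≤ p := Convex.segment_subset (convex_Ici 0) hx hy hp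
  have hp1 : 0 ≤ 1 - p := sub_nonneg.2 <|
    Convex.segment_subset (convex_Iic 1) (mem_Iic.2 (by linarith)) (mem_Iic.2 (by linarith)) hp
  rcases lt_trichotomy β 1 with hβ₁ | rfl | hβ₁
  · rw [Hren_of_ne_one_s9 hβ₁.ne, Hren_of_ne_one_s9 hβ₁.ne]
    have hsum := (concaveOn_pw_s9 hβ hβ₁.le).add_le_add_of_mem_segment hx hy hp hpq
    refine mul_le_mul_of_nonneg_left (log_le_log (pw_add_pw_pos hx hy hxy) hsum) ?_
    exact inv_nonneg.2 (by linarith)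
  · rw [Hren_one, Hren_one]
    exact Real.concaveOn_negMulLog.add_le_add_of_mem_segment hx hy hp hpq
  · rw [Hren_of_ne_one_s9 hβ₁.ne', Hren_of_ne_one_s9 hβ₁.ne']
    have hsum := (convexOn_pw hβ₁.le).add_le_add_of_mem_segment hx hy hp hpq
    refine mul_le_mul_of_nonpos_left (log_le_log (pw_add_pw_pos hp0 hp1 (by ring)) hsum) ?_
    exact inv_nonpos.2 (by linarith)

theorem cos_sq_sub_sub_cos_sq_add (γ θ : ℝ) :
    cos (γ - θ) ^ 2 - cos (γ + θ) ^ 2 = sin (2 * γ) * sin (2 * θ) := by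
  rw [cos_sub, cos_add, sin_two_mul, sin_two_mul]
  ring

theorem cos_sq_add_sub_sin_sq_sub (γ θ : ℝ) :
    cos (γ + θ) ^ 2 - sin (γ - θ) ^ 2 = cos (2 * γ) * cos (2 * θ) := by
  rw [cos_add, sin_sub, cos_two_mul', cos_two_mul']
  ring

section trig

variable {γ θ : ℝ}

theorem cos_sq_add_le_cos_sq_sub (hγ : γ ∈ Icc 0 (π / 2)) (hθ : θ ∈ Icc 0 (π / 2)) :
    cos (γ + θ) ^ 2 ≤ cos (γ - θ) ^ 2 := by
  have hsγ : 0 ≤ sin (2 * γ) :=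
    sin_nonneg_of_nonneg_of_le_pi (by linarith [hγ.1]) (by linarith [hγ.2])
  have hsθ : 0 ≤ sin (2 * θ) :=
    sin_nonneg_of_nonneg_of_le_pi (by linarith [hθ.1]) (by linarith [hθ.2])
  linarith [cos_sq_sub_sub_cos_sq_add γ θ, mul_nonneg hsγ hsθ]

theorem sin_sq_sub_le_cos_sq_add (hγ : γ ∈ Icc 0 (π / 4)) (hθ : θ ∈ Icc 0 (π / 4)) :
    sin (γ - θ) ^ 2 ≤ cos (γ + θ) ^ 2 := by
  have hcγ : 0 ≤ cos (2 * γ) :=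
    cos_nonneg_of_mem_Icc ⟨by linarith [hγ.1, pi_pos], by linarith [hγ.2]⟩
  have hcθ : 0 ≤ cos (2 * θ) :=
    cos_nonneg_of_mem_Icc ⟨by linarith [hθ.1, pi_pos], by linarith [hθ.2]⟩
  linarith [cos_sq_add_sub_sin_sq_sub γ θ, mul_nonneg hcγ hcθ]

end trig

/-- the minimum of `H_β` over the segment joining
`(cos²(γ−θ), sin²(γ−θ))` and `(cos²(γ+θ), sin²(γ+θ))` is attained at `t = 1`. -/
theorem stmt_9 (γ θ : ℝ)
    (hγ : γ ∈ Set.Icc 0 (Real.pi / 4)) (hθ : θ ∈ Set.Icc 0 (Real.pi / 4))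
    (β : ℝ) (hβ : 0 ≤ β)
    (t : ℝ) (ht : t ∈ Set.Icc (0 : ℝ) 1)
    (z1 z2 : ℝ)
    (hz1 : z1 = t * Real.cos (γ - θ) ^ 2 + (1 - t) * Real.cos (γ + θ) ^ 2)
    (hz2 : z2 = t * Real.sin (γ - θ) ^ 2 + (1 - t) * Real.sin (γ + θ) ^ 2) :
    Hren β (Real.cos (γ - θ) ^ 2) (Real.sin (γ - θ) ^ 2) ≤ Hren β z1 z2 ∧
    (t = 1 → Hren β z1 z2 = Hren β (Real.cos (γ - θ) ^ 2) (Real.sin (γ - θ) ^ 2)) := by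
  have hγ' : γ ∈ Icc 0 (π / 2) := Icc_subset_Icc_right (by linarith [pi_pos]) hγ
  have hθ' : θ ∈ Icc 0 (π / 2) := Icc_subset_Icc_right (by linarith [pi_pos]) hθ
  have hlo := sin_sq_sub_le_cos_sq_add hγ hθ
  have hhi := cos_sq_add_le_cos_sq_sub hγ' hθ'
  have hend : cos (γ + θ) ^ 2 ∈ segment ℝ (cos (γ - θ) ^ 2) (sin (γ - θ) ^ 2) := by
    rw [segment_symm, segment_eq_Icc (hlo.trans hhi)]
    exact ⟨hlo, hhi⟩
  have hz1_mem : z1 ∈ segment ℝ (cos (γ - θ) ^ 2) (sin (γ - θ) ^ 2) := by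
    rw [hz1]
    exact convex_segment _ _ (left_mem_segment ℝ _ _) hend ht.1 (sub_nonneg.2 ht.2) (by ring)
  have hz2_eq : z2 = 1 - z1 := by
    rw [hz1, hz2, sin_sq, sin_sq]
    ring
  refine ⟨?_, fun h1 => ?_⟩
  · rw [hz2_eq]
    exact Hren_le_of_mem_segment hβ (sq_nonneg _) (sq_nonneg _) (cos_sq_add_sin_sq _) hz1_mem
  · rw [hz1, hz2, h1]
    norm_num
end

section
/- Let α, β ≥ 0 and γ ∈ [0, π/4]. The function g(θ) = H_α((cos²θ, sin²θ)) + H_β((cos²(γ−θ), sin²(γ−θ))) is monotone nondecreasing on the interval [γ, π/4]; consequently, the minimum of g over [0, π/4] equals its minimum over [0, γ]. -/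
open Real

/-- `g(θ) = H_α((cos²θ, sin²θ)) + H_β((cos²(γ−θ), sin²(γ−θ)))`. -/
noncomputable def gfun (α β γ θ : ℝ) : ℝ :=
  Hren α (Real.cos θ ^ 2) (Real.sin θ ^ 2) +
    Hren β (Real.cos (γ - θ) ^ 2) (Real.sin (γ - θ) ^ 2)

/-!
Writing `p = sin²θ`, the first summand of `g` is the binary Rényi entropy `h_α(p)` of `(1 - p, p)`,
and `θ ↦ sin²θ` maps `[0, π/4]` monotonically onto `[0, 1/2]`. On `[0, 1/2]`, `h_λ` is
nondecreasing: for `λ ≠ 0, 1` it is `(1 - λ)⁻¹ log ((1 - p)^λ + p^λ)`, and the sum of powers is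
symmetric under `p ↦ 1 - p` and concave for `λ < 1`, convex for `λ > 1`; a symmetric concave
(convex) function increases (decreases) towards the midpoint. The second summand is the same
function of `θ - γ`, so both summands are nondecreasing on `[γ, π/4]`, and every value of `g` on
`[γ, π/4]` is at least `g γ`, a value attained on `[0, γ]`.
-/

open Set

section Symmetric

variable {f : ℝ → ℝ} {a b : ℝ}

lemma ConcaveOn.monotoneOn_of_symmetric (hf : ConcaveOn ℝ (Icc a b) f)
    (hsymm : ∀ x, f (a + b - x) = f x) : MonotoneOn f (Icc a ((a + b) / 2)) := by
  intro x hx y hy hxy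
  have hx' : x ∈ Icc a b := ⟨hx.1, by linarith [hx.1, hx.2]⟩
  have hx'' : a + b - x ∈ Icc a b := ⟨by linarith [hx.1, hx.2], by linarith [hx.1]⟩
  calc f x = min (f x) (f (a + b - x)) := by rw [hsymm, min_self]
    _ ≤ f y := hf.min_le_of_mem_Icc hx' hx'' ⟨hxy, by linarith [hy.2]⟩

lemma ConvexOn.antitoneOn_of_symmetric (hf : ConvexOn ℝ (Icc a b) f)
    (hsymm : ∀ x, f (a + b - x) = f x) : AntitoneOn f (Icc a ((a + b) / 2)) := by
  intro x hx y hy hxy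
  have hx' : x ∈ Icc a b := ⟨hx.1, by linarith [hx.1, hx.2]⟩
  have hx'' : a + b - x ∈ Icc a b := ⟨by linarith [hx.1, hx.2], by linarith [hx.1]⟩
  calc f y ≤ max (f x) (f (a + b - x)) := hf.le_max_of_mem_Icc hx' hx'' ⟨hxy, by linarith [hy.2]⟩
    _ = f x := by rw [hsymm, max_self]

lemma ConcaveOn.add_comp_one_sub (hf : ConcaveOn ℝ (Ici 0) f) :
    ConcaveOn ℝ (Icc 0 1) (fun p => f (1 - p) + f p) := by
  have hflip : ConcaveOn ℝ ((fun p => 1 - p) ⁻¹' Ici 0) (fun p => f (1 - p)) :=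
    hf.comp_affineMap (AffineMap.const ℝ ℝ 1 - AffineMap.id ℝ ℝ)
  exact (hflip.subset (fun p hp => sub_nonneg.2 hp.2) (convex_Icc 0 1)).add
    (hf.subset Icc_subset_Ici_self (convex_Icc 0 1))

lemma ConvexOn.add_comp_one_sub (hf : ConvexOn ℝ (Ici 0) f) :
    ConvexOn ℝ (Icc 0 1) (fun p => f (1 - p) + f p) := by
  have hflip : ConvexOn ℝ ((fun p => 1 - p) ⁻¹' Ici 0) (fun p => f (1 - p)) :=
    hf.comp_affineMap (AffineMap.const ℝ ℝ 1 - AffineMap.id ℝ ℝ)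
  exact (hflip.subset (fun p hp => sub_nonneg.2 hp.2) (convex_Icc 0 1)).add
    (hf.subset Icc_subset_Ici_self (convex_Icc 0 1))

end Symmetric

section BinaryRenyi

variable {lam : ℝ}

lemma pw_eq_rpow_s11 (p : ℝ) (hlam : lam ≠ 0) : pw p lam = p ^ lam := by
  unfold pw
  split_ifs with h
  · rw [h, zero_rpow hlam]
  · rfl

lemma Hren_one_sub_eq_log (p : ℝ) (hlam₀ : lam ≠ 0) (hlam₁ : lam ≠ 1) :
    Hren lam (1 - p) p = (1 - lam)⁻¹ * log ((1 - p) ^ lam + p ^ lam) := by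
  rw [Hren, if_neg hlam₁, pw_eq_rpow_s11 _ hlam₀, pw_eq_rpow_s11 _ hlam₀]

lemma Hren_one_eq_binEntropy (p : ℝ) : Hren 1 (1 - p) p = binEntropy p := by
  rw [Hren, if_pos rfl, binEntropy, log_inv, log_inv]
  ring

lemma monotoneOn_Hren_zero : MonotoneOn (fun p => Hren 0 (1 - p) p) (Icc 0 (1 / 2)) := by
  have hpw_one : ∀ p ∈ Icc (0 : ℝ) (1 / 2), pw (1 - p) 0 = 1 := fun p hp => by
    rw [pw, if_neg (by linarith [hp.2]), rpow_zero]
  intro p hp q hq hpq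
  have hpw : pw p 0 ≤ pw q 0 := by
    rcases eq_or_ne p 0 with rfl | hp0
    · rw [pw, if_pos rfl]
      unfold pw; split_ifs <;> norm_num
    · rw [pw, pw, if_neg hp0, if_neg (by linarith [lt_of_le_of_ne hp.1 hp0.symm]), rpow_zero,
        rpow_zero]
  have hpw_nonneg : 0 ≤ pw p 0 := by unfold pw; split_ifs <;> norm_num
  simp only [Hren, zero_ne_one, if_false, sub_zero, inv_one, one_mul, hpw_one p hp,
    hpw_one q hq]
  exact log_le_log (by linarith) (by linarith)

lemma monotoneOn_Hren (hlam : 0 ≤ lam) :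
    MonotoneOn (fun p => Hren lam (1 - p) p) (Icc 0 (1 / 2)) := by
  rcases eq_or_ne lam 1 with rfl | hlam₁
  · simp only [Hren_one_eq_binEntropy]
    simpa [one_div] using binEntropy_strictMonoOn.monotoneOn
  rcases hlam.eq_or_lt with rfl | hlam₀
  · exact monotoneOn_Hren_zero
  simp only [Hren_one_sub_eq_log _ hlam₀.ne' hlam₁]
  have hsymm : ∀ p : ℝ, (1 - (0 + 1 - p)) ^ lam + (0 + 1 - p) ^ lam = (1 - p) ^ lam + p ^ lam :=
    fun p => by rw [zero_add, sub_sub_cancel, add_comm]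
  have hpos : ∀ p ∈ Icc (0 : ℝ) (1 / 2), 0 < (1 - p) ^ lam + p ^ lam := fun p hp =>
    add_pos_of_pos_of_nonneg (rpow_pos_of_pos (by linarith [hp.2]) _) (rpow_nonneg hp.1 _)
  intro p hp q hq hpq
  rcases lt_or_gt_of_ne hlam₁ with hlt | hgt
  · have hmono := ((concaveOn_rpow hlam hlt.le).add_comp_one_sub.monotoneOn_of_symmetric hsymm)
    rw [zero_add] at hmono
    exact mul_le_mul_of_nonneg_left (log_le_log (hpos p hp) (hmono hp hq hpq))
      (inv_nonneg.2 (by linarith))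
  · have hanti := ((convexOn_rpow hgt.le).add_comp_one_sub.antitoneOn_of_symmetric hsymm)
    rw [zero_add] at hanti
    exact mul_le_mul_of_nonpos_left (log_le_log (hpos q hq) (hanti hp hq hpq))
      (inv_nonpos.2 (by linarith))

end BinaryRenyi

lemma monotoneOn_sin_sq : MonotoneOn (fun θ => sin θ ^ 2) (Icc 0 (π / 2)) :=
  fun _ ha _ hb hab => pow_le_pow_left₀
    (sin_nonneg_of_nonneg_of_le_pi ha.1 (by linarith [ha.2, pi_pos]))
    (sin_le_sin_of_le_of_le_pi_div_two (by linarith [ha.1, pi_pos]) hb.2 hab) 2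

lemma mapsTo_sin_sq : MapsTo (fun θ => sin θ ^ 2) (Icc 0 (π / 4)) (Icc 0 (1 / 2)) := by
  intro θ hθ
  have hquarter : π / 4 ≤ π / 2 := by linarith [pi_pos]
  refine ⟨sq_nonneg _, ?_⟩
  calc sin θ ^ 2 ≤ sin (π / 4) ^ 2 :=
        monotoneOn_sin_sq ⟨hθ.1, hθ.2.trans hquarter⟩ ⟨by linarith [pi_pos], hquarter⟩ hθ.2
    _ = 1 / 2 := by rw [sin_pi_div_four, div_pow, sq_sqrt zero_le_two]; norm_num

lemma monotoneOn_Hren_cos_sq_sin_sq {lam : ℝ} (hlam : 0 ≤ lam) :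
    MonotoneOn (fun θ => Hren lam (cos θ ^ 2) (sin θ ^ 2)) (Icc 0 (π / 4)) := by
  simp only [cos_sq']
  exact (monotoneOn_Hren hlam).comp (monotoneOn_sin_sq.mono
    (Icc_subset_Icc le_rfl (by linarith [pi_pos]))) mapsTo_sin_sq

lemma monotoneOn_gfun {α β γ : ℝ} (hα : 0 ≤ α) (hβ : 0 ≤ β) (hγ : 0 ≤ γ) :
    MonotoneOn (gfun α β γ) (Icc γ (π / 4)) := by
  have hshift : MapsTo (fun θ => θ - γ) (Icc γ (π / 4)) (Icc 0 (π / 4)) :=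
    fun θ hθ => ⟨by linarith [hθ.1], by linarith [hθ.2]⟩
  have hsecond := (monotoneOn_Hren_cos_sq_sin_sq hβ).comp
    (fun _ _ _ _ h => sub_le_sub_right h γ) hshift
  have hfirst := (monotoneOn_Hren_cos_sq_sin_sq hα).mono (Icc_subset_Icc hγ le_rfl)
  convert hfirst.add hsecond using 1
  ext θ
  simp only [gfun, Function.comp_apply, ← neg_sub θ γ, cos_neg, sin_neg, neg_sq]

/-- the entropies sum is nondecreasing on `[γ, π/4]`, so its minimum
over `[0, π/4]` equals its minimum over `[0, γ]`. -/
theorem stmt_11 (α β : ℝ) (hα : 0 ≤ α) (hβ : 0 ≤ β)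
    (γ : ℝ) (hγ : γ ∈ Set.Icc 0 (Real.pi / 4)) :
    MonotoneOn (fun θ : ℝ => gfun α β γ θ) (Set.Icc γ (Real.pi / 4)) ∧
    sInf ((fun θ : ℝ => gfun α β γ θ) '' Set.Icc 0 (Real.pi / 4)) =
      sInf ((fun θ : ℝ => gfun α β γ θ) '' Set.Icc 0 γ) := by
  have hmono := monotoneOn_gfun hα hβ hγ.1
  refine ⟨hmono, csInf_eq_csInf_of_forall_exists_le ?_ ?_⟩
  · rintro _ ⟨θ, hθ, rfl⟩
    rcases le_total θ γ with hθγ | hγθ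
    · exact ⟨_, ⟨θ, ⟨hθ.1, hθγ⟩, rfl⟩, le_rfl⟩
    · exact ⟨_, ⟨γ, ⟨hγ.1, le_rfl⟩, rfl⟩, hmono ⟨le_rfl, hγ.2⟩ ⟨hγθ, hθ.2⟩ hγθ⟩
  · rintro _ ⟨θ, hθ, rfl⟩
    exact ⟨_, ⟨θ, ⟨hθ.1, hθ.2.trans hγ.2⟩, rfl⟩, le_rfl⟩
end
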